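/- arXiv:2311.06277 — 2 statements merged into one kernel-verified Lean document; each statement's English description precedes it below -/
import Mathlib

section
/- Let ω ∈ 𝓑'₀ have power series expansion ω(z) = c₁z + c₂z² + c₃z³ + ⋯ on 𝔻. Then |c₁c₃ − c₂²| ≤ (1/12)·(1 − |c₁|²)·(3 + |c₁|²). -/
/-!
The derivative `g = ω'` maps the disk into the closed disk and has Taylor coefficients
`c₁, 2c₂, 3c₃`. One step of the Schur algorithm (compose `g` with the disk automorphism sending
`g 0` to `0`, divide by `z`, apply Schwarz–Pick) gives
`|3c₃(1 - |c₁|²) + c̄₁(2c₂)²| ≤ (1 - |c₁|²)² - 4|c₂|²`. Since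
`3(1 - |c₁|²)(c₁c₃ - c₂²) = c₁(3c₃(1 - |c₁|²) + 4c̄₁c₂²) - (3 + |c₁|²)c₂²`, the triangle inequality
and `4|c₂|² ≤ (1 - |c₁|²)²` give the bound. If `|c₁| = 1`, then `g` is constant by the maximum
principle, so `c₂ = c₃ = 0`.
-/

open Complex Metric Set ComplexConjugate FormalMultilinearSeries Filter Topology Nat

theorem iteratedDeriv_eq_factorial_mul_of_hasSum {𝕜 : Type*} [NontriviallyNormedField 𝕜]
    [CompleteSpace 𝕜] [CharZero 𝕜] {f : 𝕜 → 𝕜} {a : ℕ → 𝕜} {s : Set 𝕜} (hs : s ∈ 𝓝 0)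
    (hf : ∀ z ∈ s, HasSum (fun n => a n * z ^ n) (f z)) (n : ℕ) :
    iteratedDeriv n f 0 = n ! * a n := by
  have hp : HasFPowerSeriesAt f (ofScalars 𝕜 a) 0 := by
    rw [hasFPowerSeriesAt_iff]
    filter_upwards [hs] with z hz
    simpa [coeff_ofScalars, mul_comm] using hf z hz
  have hcoeff := ofScalars_series_injective (𝕜 := 𝕜) (E := 𝕜)
    (hp.eq_formalMultilinearSeries hp.analyticAt.hasFPowerSeriesAt)
  rw [congrFun hcoeff n]
  exact (mul_div_cancel₀ _ (Nat.cast_ne_zero.2 n.factorial_ne_zero)).symm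

noncomputable def moebius (a w : ℂ) : ℂ := (w - a) / (1 - conj a * w)

namespace moebius

@[simp]
theorem self (a : ℂ) : moebius a a = 0 := by simp [moebius]

theorem one_sub_conj_mul_ne_zero {a w : ℂ} (ha : ‖a‖ < 1) (hw : ‖w‖ ≤ 1) :
    1 - conj a * w ≠ 0 := by
  intro h
  have h1 : ‖conj a * w‖ < 1 := by
    rw [norm_mul, norm_conj]
    nlinarith [norm_nonneg a, norm_nonneg w]
  rw [← sub_eq_zero.mp h, norm_one] at h1
  exact lt_irrefl _ h1

theorem sq_norm_one_sub_conj_mul_sub_sq_norm_sub (a w : ℂ) :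
    ‖1 - conj a * w‖ ^ 2 - ‖w - a‖ ^ 2 = (1 - ‖a‖ ^ 2) * (1 - ‖w‖ ^ 2) := by
  simp only [Complex.sq_norm, normSq_apply, sub_re, sub_im, mul_re, mul_im, one_re, one_im,
    conj_re, conj_im]
  ring

theorem norm_le_one {a w : ℂ} (ha : ‖a‖ < 1) (hw : ‖w‖ ≤ 1) : ‖moebius a w‖ ≤ 1 := by
  have hne := one_sub_conj_mul_ne_zero ha hw
  rw [moebius, norm_div, div_le_one (norm_pos_iff.mpr hne)]
  have := sq_norm_one_sub_conj_mul_sub_sq_norm_sub a w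
  have : 0 ≤ (1 - ‖a‖ ^ 2) * (1 - ‖w‖ ^ 2) := by
    apply mul_nonneg <;> nlinarith [norm_nonneg a, norm_nonneg w]
  exact (sq_le_sq₀ (norm_nonneg _) (norm_nonneg _)).mp (by linarith)

theorem hasDerivAt {a w : ℂ} (hw : 1 - conj a * w ≠ 0) :
    HasDerivAt (moebius a) ((1 - conj a * a) / (1 - conj a * w) ^ 2) w := by
  have h := ((hasDerivAt_id' w).sub_const a).div
    (((hasDerivAt_id' w).const_mul (conj a)).const_sub 1) hw
  exact h.congr_deriv (by ring)

theorem hasDerivAt_comp {f : ℂ → ℂ} {f' a z : ℂ} (hf : HasDerivAt f f' z)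
    (hz : 1 - conj a * f z ≠ 0) :
    HasDerivAt (fun x => moebius a (f x)) ((1 - conj a * a) * f' / (1 - conj a * f z) ^ 2) z :=
  ((hasDerivAt hz).comp z hf).congr_deriv (by ring)

end moebius

theorem AnalyticAt.deriv_dslope_same {𝕜 : Type*} [NontriviallyNormedField 𝕜] [CompleteSpace 𝕜]
    [CharZero 𝕜] {f : 𝕜 → 𝕜} {a : 𝕜} (hf : AnalyticAt 𝕜 f a) :
    deriv (dslope f a) a = iteratedDeriv 2 f a / 2 := by
  rw [hf.hasFPowerSeriesAt.has_fpower_series_dslope_fslope.deriv]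
  change (fslope _).coeff 1 = _
  rw [coeff_fslope, coeff_ofScalars]
  norm_num

theorem eventuallyEq_const_of_norm_eq_one {f : ℂ → ℂ} (hf : DifferentiableOn ℂ f (ball 0 1))
    (hmaps : MapsTo f (ball 0 1) (closedBall 0 1)) (h0 : ‖f 0‖ = 1) :
    f =ᶠ[𝓝 0] fun _ => f 0 := by
  have hmax : IsMaxOn (norm ∘ f) (ball 0 1) 0 := fun z hz => by
    simpa [h0] using hmaps hz
  exact eventually_of_mem (ball_mem_nhds 0 one_pos) <|
    eqOn_of_isPreconnected_of_isMaxOn_norm (convex_ball 0 1).isPreconnected isOpen_ball hf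
      (mem_ball_self one_pos) hmax

section SelfMapOfDisk

variable {f : ℂ → ℂ} (hf : DifferentiableOn ℂ f (ball 0 1))
  (hmaps : MapsTo f (ball 0 1) (closedBall 0 1))
include hf hmaps

theorem hasDerivAt_moebius_comp (ha : ‖f 0‖ < 1) {z : ℂ} (hz : z ∈ ball 0 1) :
    HasDerivAt (fun z => moebius (f 0) (f z))
      ((1 - conj (f 0) * f 0) * deriv f z / (1 - conj (f 0) * f z) ^ 2) z :=
  moebius.hasDerivAt_comp (hf.differentiableAt (isOpen_ball.mem_nhds hz)).hasDerivAt
    (moebius.one_sub_conj_mul_ne_zero ha (by simpa using hmaps hz))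

theorem differentiableOn_moebius_comp (ha : ‖f 0‖ < 1) :
    DifferentiableOn ℂ (fun z => moebius (f 0) (f z)) (ball 0 1) := fun _ hz =>
  (hasDerivAt_moebius_comp hf hmaps ha hz).differentiableAt.differentiableWithinAt

omit hf in
theorem mapsTo_moebius_comp (ha : ‖f 0‖ < 1) :
    MapsTo (fun z => moebius (f 0) (f z)) (ball 0 1) (closedBall 0 1) := fun _ hz => by
  simpa using moebius.norm_le_one ha (by simpa using hmaps hz)

theorem deriv_moebius_comp_zero (ha : ‖f 0‖ < 1) :
    deriv (fun z => moebius (f 0) (f z)) 0 = deriv f 0 / ((1 - ‖f 0‖ ^ 2 : ℝ) : ℂ) := by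
  rw [(hasDerivAt_moebius_comp hf hmaps ha (mem_ball_self one_pos)).deriv, conj_mul']
  push_cast
  field_simp

theorem iteratedDeriv_two_moebius_comp_zero (ha : ‖f 0‖ < 1) :
    iteratedDeriv 2 (fun z => moebius (f 0) (f z)) 0
      = 2 * (deriv (deriv f) 0 / 2 * ((1 - ‖f 0‖ ^ 2 : ℝ) : ℂ) + conj (f 0) * deriv f 0 ^ 2)
        / ((1 - ‖f 0‖ ^ 2 : ℝ) : ℂ) ^ 2 := by
  have h0 : ball (0 : ℂ) 1 ∈ 𝓝 0 := ball_mem_nhds 0 one_pos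
  have hderiv : deriv (fun z => moebius (f 0) (f z)) =ᶠ[𝓝 0]
      fun z => (1 - conj (f 0) * f 0) * deriv f z / (1 - conj (f 0) * f z) ^ 2 :=
    eventually_of_mem h0 fun z hz => (hasDerivAt_moebius_comp hf hmaps ha hz).deriv
  have hf' : HasDerivAt f (deriv f 0) 0 := (hf.differentiableAt h0).hasDerivAt
  have hf'' : HasDerivAt (deriv f) (deriv (deriv f) 0) 0 :=
    ((hf.deriv isOpen_ball).differentiableAt h0).hasDerivAt
  have hu := ((hf'.const_mul (conj (f 0))).const_sub 1).pow 2
  have hne : 1 - conj (f 0) * f 0 ≠ 0 := moebius.one_sub_conj_mul_ne_zero ha ha.le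
  have hk : HasDerivAt
      (fun z => (1 - conj (f 0) * f 0) * deriv f z / (1 - conj (f 0) * f z) ^ 2) _ 0 :=
    (hf''.const_mul _).div hu (pow_ne_zero 2 hne)
  rw [iteratedDeriv_succ, iteratedDeriv_one, hderiv.deriv_eq, hk.deriv]
  rw [conj_mul'] at hne ⊢
  push_cast
  field_simp
  ring

theorem norm_deriv_le_one_sub_sq_norm : ‖deriv f 0‖ ≤ 1 - ‖f 0‖ ^ 2 := by
  have h0 : ‖f 0‖ ≤ 1 := by simpa using hmaps (mem_ball_self one_pos)
  rcases h0.lt_or_eq with ha | ha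
  · have hD : 0 < 1 - ‖f 0‖ ^ 2 := by nlinarith [norm_nonneg (f 0)]
    have hschwarz := norm_deriv_le_div_of_mapsTo_ball (differentiableOn_moebius_comp hf hmaps ha)
      (by simpa using mapsTo_moebius_comp hmaps ha) one_pos
    rwa [deriv_moebius_comp_zero hf hmaps ha, norm_div, norm_real, Real.norm_of_nonneg hD.le,
      div_one, div_le_one hD] at hschwarz
  · rw [(eventuallyEq_const_of_norm_eq_one hf hmaps ha).deriv_eq, deriv_const, ha]
    norm_num

/-- The Schwarz–Pick bound applied to `f z / z`. -/
theorem norm_iteratedDeriv_two_div_two_le (h0 : f 0 = 0) :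
    ‖iteratedDeriv 2 f 0 / 2‖ ≤ 1 - ‖deriv f 0‖ ^ 2 := by
  have hmaps' : MapsTo f (ball 0 1) (closedBall (f 0) 1) := by rwa [h0]
  have hslope := norm_deriv_le_one_sub_sq_norm
    ((differentiableOn_dslope (ball_mem_nhds 0 one_pos)).2 hf)
    (fun z hz => by simpa using norm_dslope_le_div_of_mapsTo_ball hf hmaps' hz)
  rwa [dslope_same, (hf.analyticOnNhd isOpen_ball 0 (mem_ball_self one_pos)).deriv_dslope_same]
    at hslope

theorem norm_schur_le (ha : ‖f 0‖ < 1) :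
    ‖deriv (deriv f) 0 / 2 * ((1 - ‖f 0‖ ^ 2 : ℝ) : ℂ) + conj (f 0) * deriv f 0 ^ 2‖
      ≤ (1 - ‖f 0‖ ^ 2) ^ 2 - ‖deriv f 0‖ ^ 2 := by
  have hD : 0 < 1 - ‖f 0‖ ^ 2 := by nlinarith [norm_nonneg (f 0)]
  have hSP := norm_iteratedDeriv_two_div_two_le (differentiableOn_moebius_comp hf hmaps ha)
    (mapsTo_moebius_comp hmaps ha) (moebius.self _)
  rw [iteratedDeriv_two_moebius_comp_zero hf hmaps ha, deriv_moebius_comp_zero hf hmaps ha,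
    mul_div_assoc, mul_div_cancel_left₀ _ two_ne_zero, norm_div, norm_div, norm_pow, norm_real,
    Real.norm_of_nonneg hD.le, div_pow, div_le_iff₀ (by positivity)] at hSP
  calc _ ≤ (1 - ‖deriv f 0‖ ^ 2 / (1 - ‖f 0‖ ^ 2) ^ 2) * (1 - ‖f 0‖ ^ 2) ^ 2 := hSP
    _ = (1 - ‖f 0‖ ^ 2) ^ 2 - ‖deriv f 0‖ ^ 2 := by field_simp

end SelfMapOfDisk

theorem norm_mul_sub_sq_le_of_schur {c₁ c₂ c₃ : ℂ} (h₁ : ‖c₁‖ < 1)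
    (hS : ‖3 * c₃ * ((1 - ‖c₁‖ ^ 2 : ℝ) : ℂ) + conj c₁ * (2 * c₂) ^ 2‖
      ≤ (1 - ‖c₁‖ ^ 2) ^ 2 - ‖2 * c₂‖ ^ 2) :
    ‖c₁ * c₃ - c₂ ^ 2‖ ≤ 1 / 12 * (1 - ‖c₁‖ ^ 2) * (3 + ‖c₁‖ ^ 2) := by
  set r := ‖c₁‖
  set T := 3 * c₃ * ((1 - r ^ 2 : ℝ) : ℂ) + conj c₁ * (2 * c₂) ^ 2
  have hr : 0 ≤ r := norm_nonneg _
  have hD : 0 < 1 - r ^ 2 := by nlinarith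
  rw [norm_mul, Complex.norm_two] at hS
  have hid : ((3 * (1 - r ^ 2) : ℝ) : ℂ) * (c₁ * c₃ - c₂ ^ 2)
      = c₁ * T - ((3 + r ^ 2 : ℝ) : ℂ) * c₂ ^ 2 := by
    simp only [T]
    push_cast
    linear_combination (-4 * c₂ ^ 2) * conj_mul' c₁
  have hnorm : 3 * (1 - r ^ 2) * ‖c₁ * c₃ - c₂ ^ 2‖ ≤ r * ‖T‖ + (3 + r ^ 2) * ‖c₂‖ ^ 2 := by
    calc 3 * (1 - r ^ 2) * ‖c₁ * c₃ - c₂ ^ 2‖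
        = ‖((3 * (1 - r ^ 2) : ℝ) : ℂ) * (c₁ * c₃ - c₂ ^ 2)‖ := by
          rw [norm_mul, norm_real, Real.norm_of_nonneg (by positivity)]
      _ = ‖c₁ * T - ((3 + r ^ 2 : ℝ) : ℂ) * c₂ ^ 2‖ := by rw [hid]
      _ ≤ r * ‖T‖ + (3 + r ^ 2) * ‖c₂‖ ^ 2 := by
          refine (norm_sub_le _ _).trans_eq ?_
          rw [norm_mul, norm_mul, norm_pow, norm_real, Real.norm_of_nonneg (by positivity)]
  have hweight : 0 ≤ ((1 - r ^ 2) ^ 2 - (2 * ‖c₂‖) ^ 2) * ((1 - r) * (3 - r)) :=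
    mul_nonneg (by linarith [norm_nonneg T]) (mul_nonneg (by linarith) (by linarith))
  have : 12 * (1 - r ^ 2) * ‖c₁ * c₃ - c₂ ^ 2‖ ≤ (1 - r ^ 2) ^ 2 * (3 + r ^ 2) := by
    nlinarith
  nlinarith

theorem stmt_12_general (ω : ℂ → ℂ) (c : ℕ → ℂ)
    (hd : DifferentiableOn ℂ ω (ball 0 1))
    (hb : ∀ z ∈ ball (0:ℂ) 1, ‖deriv ω z‖ ≤ 1)
    (hc : ∀ z ∈ ball (0:ℂ) 1, HasSum (fun n : ℕ => c (n + 1) * z ^ (n + 1)) (ω z)) :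
    ‖c 1 * c 3 - c 2^2‖ ≤ (1/12) * (1 - ‖c 1‖^2) * (3 + ‖c 1‖^2) := by
  set g := deriv ω
  have hcoeff (n : ℕ) : iteratedDeriv n g 0 = (n + 1)! * c (n + 1) := by
    -- `c 0` is unconstrained, so the series of `ω` is taken with constant term `0`.
    have hsum (z : ℂ) (hz : z ∈ ball 0 1) :
        HasSum (fun n => Function.update c 0 0 n * z ^ n) (ω z) := by
      simpa using (hasSum_nat_add_iff (f := fun n => Function.update c 0 0 n * z ^ n) 1).mp
        (by simpa using hc z hz)
    rw [← iteratedDeriv_succ']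
    exact iteratedDeriv_eq_factorial_mul_of_hasSum (ball_mem_nhds 0 one_pos) hsum (n + 1)
  have hg : DifferentiableOn ℂ g (ball 0 1) := hd.deriv isOpen_ball
  have hg_maps : MapsTo g (ball 0 1) (closedBall 0 1) := fun z hz => by simpa using hb z hz
  have hg0 : g 0 = c 1 := by simpa using hcoeff 0
  have hg0_le : ‖g 0‖ ≤ 1 := hb 0 (mem_ball_self one_pos)
  rcases hg0_le.lt_or_eq with hlt | heq
  · refine norm_mul_sub_sq_le_of_schur (hg0 ▸ hlt) ?_
    have hg1 : deriv g 0 = 2 * c 2 := by simpa using hcoeff 1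
    have hg2 : deriv (deriv g) 0 = 6 * c 3 := by
      simpa [iteratedDeriv_succ, Nat.factorial] using hcoeff 2
    have hS := norm_schur_le hg hg_maps hlt
    rwa [hg0, hg1, hg2, show 6 * c 3 / 2 = 3 * c 3 by ring] at hS
  · have hconst := eventuallyEq_const_of_norm_eq_one hg hg_maps heq
    have hvanish (n : ℕ) (hn : n ≠ 0) : c (n + 1) = 0 := by
      have := hcoeff n
      rw [hconst.iteratedDeriv_eq, iteratedDeriv_const, if_neg hn] at this
      simpa [Nat.factorial_ne_zero] using this.symm
    rw [hvanish 1 one_ne_zero, hvanish 2 two_ne_zero, ← hg0, heq]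
    norm_num

theorem stmt_12 (ω : ℂ → ℂ) (c : ℕ → ℂ)
    (hd : DifferentiableOn ℂ ω (ball 0 1))
    (h0 : ω 0 = 0)
    (hb : ∀ z ∈ ball (0:ℂ) 1, ‖deriv ω z‖ ≤ 1)
    (hc : ∀ z ∈ ball (0:ℂ) 1, HasSum (fun n : ℕ => c (n + 1) * z ^ (n + 1)) (ω z)) :
    ‖c 1 * c 3 - c 2^2‖ ≤ (1/12) * (1 - ‖c 1‖^2) * (3 + ‖c 1‖^2) :=
  stmt_12_general ω c hd hb hc
end

section
/- Let ω ∈ 𝓑'₀ have power series expansion ω(z) = c₁z + c₂z² + c₃z³ + ⋯ on 𝔻, let μ ∈ ℂ, and suppose |μ| ≥ (4/3)·|c₁|/(1 + |c₁|). Then |c₁c₃ − μc₂²| ≤ (1/12)·(3|μ| + 2(2 − 3|μ|)|c₁|² − (4 − 3|μ|)|c₁|⁴). -/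
/-!
The derivative `φ = ω'` maps the unit disc into the closed unit disc, and its Taylor coefficients
at `0` are `c₁, 2c₂, 3c₃`. Let `ψ` be `φ` followed by the disc automorphism sending `φ 0` to `0`.
The Schwarz lemma for `ψ` gives `2|c₂| ≤ 1 - |c₁|²` (Schwarz–Pick at the origin), and this estimate
applied to `ψ(z)/z` gives `3|c₃| ≤ 1 - |c₁|² - 4|c₂|² / (1 + |c₁|)`. After the triangle inequality
`|c₁c₃ - μc₂²| ≤ |c₁||c₃| + |μ||c₂|²`, the claim is a nonnegative combination of these two bounds,
with the hypothesis on `μ` saying exactly that `3|μ|(1 + |c₁|) - 4|c₁| ≥ 0`.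
-/

open Complex Metric Set Filter Topology ComplexConjugate

theorem norm_sub_le_norm_one_sub_conj_mul {a w : ℂ} (ha : ‖a‖ ≤ 1) (hw : ‖w‖ ≤ 1) :
    ‖w - a‖ ≤ ‖1 - conj a * w‖ := by
  have key : normSq (1 - conj a * w) - normSq (w - a) = (1 - normSq a) * (1 - normSq w) := by
    simp only [normSq_apply, sub_re, sub_im, mul_re, mul_im, one_re, one_im, conj_re, conj_im]
    ring
  have ha' : normSq a ≤ 1 := by rw [normSq_eq_norm_sq]; exact pow_le_one₀ (norm_nonneg a) ha
  have hw' : normSq w ≤ 1 := by rw [normSq_eq_norm_sq]; exact pow_le_one₀ (norm_nonneg w) hw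
  rw [← sq_le_sq₀ (norm_nonneg _) (norm_nonneg _), ← normSq_eq_norm_sq, ← normSq_eq_norm_sq]
  nlinarith [mul_nonneg (sub_nonneg.2 ha') (sub_nonneg.2 hw')]

theorem one_sub_conj_mul_ne_zero {a w : ℂ} (ha : ‖a‖ < 1) (hw : ‖w‖ ≤ 1) :
    1 - conj a * w ≠ 0 := by
  refine sub_ne_zero.2 fun h ↦ ?_
  have : ‖conj a * w‖ < 1 := by
    rw [norm_mul, norm_conj]
    nlinarith [norm_nonneg a, norm_nonneg w]
  simp [← h] at this

theorem deriv_dslope_self {𝕜 : Type*} [NontriviallyNormedField 𝕜] [CompleteSpace 𝕜] [CharZero 𝕜]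
    {f : 𝕜 → 𝕜} {x : 𝕜} (hf : AnalyticAt 𝕜 f x) :
    deriv (dslope f x) x = iteratedDeriv 2 f x / 2 := by
  rw [hf.hasFPowerSeriesAt.has_fpower_series_dslope_fslope.deriv]
  simp [FormalMultilinearSeries.coeff_fslope]

theorem iteratedDeriv_two_mul_of_eq_zero {𝕜 : Type*} [NontriviallyNormedField 𝕜]
    {f g : 𝕜 → 𝕜} {x : 𝕜} (hf : ContDiffAt 𝕜 2 f x) (hg : ContDiffAt 𝕜 2 g x) (hfx : f x = 0) :
    iteratedDeriv 2 (f * g) x = iteratedDeriv 2 f x * g x + 2 * deriv f x * deriv g x := by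
  rw [iteratedDeriv_mul hf hg]
  simp only [Finset.sum_range_succ, Finset.range_one, Finset.sum_singleton, Nat.choose_zero_right,
    Nat.choose_succ_self_right, Nat.choose_self, Nat.cast_one, Nat.cast_ofNat, iteratedDeriv_zero,
    iteratedDeriv_one, hfx, mul_zero, one_mul, Nat.reduceAdd, tsub_zero, tsub_self,
    Nat.add_one_sub_one]
  ring

noncomputable def mobiusComp (φ : ℂ → ℂ) (z : ℂ) : ℂ :=
  (φ z - φ 0) / (1 - conj (φ 0) * φ z)

@[simp]
theorem mobiusComp_zero (φ : ℂ → ℂ) : mobiusComp φ 0 = 0 := by simp [mobiusComp]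

section SelfMapOfDisc

variable {φ : ℂ → ℂ}

theorem mobiusComp_mul_one_sub_conj_mul {z : ℂ} (ha : ‖φ 0‖ < 1) (hz : ‖φ z‖ ≤ 1) :
    mobiusComp φ z * (1 - conj (φ 0) * φ z) = φ z - φ 0 :=
  div_mul_cancel₀ _ (one_sub_conj_mul_ne_zero ha hz)

theorem differentiableOn_mobiusComp (hφ : DifferentiableOn ℂ φ (ball 0 1))
    (hφ1 : MapsTo φ (ball 0 1) (closedBall 0 1)) (ha : ‖φ 0‖ < 1) :
    DifferentiableOn ℂ (mobiusComp φ) (ball 0 1) :=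
  (hφ.sub_const _).div ((differentiableOn_const _).sub ((differentiableOn_const _).mul hφ))
    fun z hz ↦ one_sub_conj_mul_ne_zero ha (by simpa using hφ1 hz)

theorem mapsTo_mobiusComp (hφ1 : MapsTo φ (ball 0 1) (closedBall 0 1)) (ha : ‖φ 0‖ < 1) :
    MapsTo (mobiusComp φ) (ball 0 1) (closedBall 0 1) := by
  intro z hz
  have hz1 : ‖φ z‖ ≤ 1 := by simpa using hφ1 hz
  rw [mem_closedBall_zero_iff, mobiusComp, norm_div,
    div_le_one (norm_pos_iff.2 (one_sub_conj_mul_ne_zero ha hz1))]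
  exact norm_sub_le_norm_one_sub_conj_mul ha.le hz1

theorem deriv_and_iteratedDeriv_two_eq_mobiusComp (hφ : DifferentiableOn ℂ φ (ball 0 1))
    (hφ1 : MapsTo φ (ball 0 1) (closedBall 0 1)) (ha : ‖φ 0‖ < 1) :
    deriv φ 0 = deriv (mobiusComp φ) 0 * ((1 - ‖φ 0‖ ^ 2 : ℝ) : ℂ) ∧
      iteratedDeriv 2 φ 0 = iteratedDeriv 2 (mobiusComp φ) 0 * ((1 - ‖φ 0‖ ^ 2 : ℝ) : ℂ)
        - 2 * conj (φ 0) * deriv (mobiusComp φ) 0 * deriv φ 0 := by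
  set u : ℂ → ℂ := fun z ↦ 1 - conj (φ 0) * φ z
  have h0 : ball (0 : ℂ) 1 ∈ 𝓝 0 := ball_mem_nhds 0 one_pos
  have hφa : AnalyticAt ℂ φ 0 := hφ.analyticAt h0
  have hga : AnalyticAt ℂ (mobiusComp φ) 0 := (differentiableOn_mobiusComp hφ hφ1 ha).analyticAt h0
  have hua : AnalyticAt ℂ u 0 := analyticAt_const.sub (analyticAt_const.mul hφa)
  have hprod : mobiusComp φ * u =ᶠ[𝓝 0] fun z ↦ φ z - φ 0 :=
    eventually_of_mem h0 fun z hz ↦ mobiusComp_mul_one_sub_conj_mul ha (by simpa using hφ1 hz)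
  have hu0 : u 0 = ((1 - ‖φ 0‖ ^ 2 : ℝ) : ℂ) := by simp [u, conj_mul']
  have hu' : deriv u 0 = -(conj (φ 0) * deriv φ 0) := by
    simp [u, deriv_const_sub, deriv_const_mul _ hφa.differentiableAt]
  constructor
  · rw [← deriv_sub_const (φ 0), ← hprod.deriv_eq,
      deriv_mul hga.differentiableAt hua.differentiableAt, mobiusComp_zero, hu0]
    ring
  · rw [iteratedDeriv_succ', ← deriv_sub_const_fun (φ 0), ← iteratedDeriv_succ',
      ← hprod.iteratedDeriv_eq, iteratedDeriv_two_mul_of_eq_zero hga.contDiffAt hua.contDiffAt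
        (mobiusComp_zero φ), hu0, hu', deriv_sub_const]
    ring

theorem iteratedDeriv_eq_zero_of_norm_eq_one (hφ : DifferentiableOn ℂ φ (ball 0 1))
    (hφ1 : MapsTo φ (ball 0 1) (closedBall 0 1)) (h : ‖φ 0‖ = 1) {n : ℕ} (hn : n ≠ 0) :
    iteratedDeriv n φ 0 = 0 := by
  have hmax : IsLocalMax (norm ∘ φ) 0 :=
    eventually_of_mem (ball_mem_nhds 0 one_pos) fun z hz ↦ by simpa [h] using hφ1 hz
  have hdiff : ∀ᶠ z in 𝓝 0, DifferentiableAt ℂ φ z :=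
    eventually_of_mem (ball_mem_nhds 0 one_pos) fun z hz ↦
      hφ.differentiableAt (isOpen_ball.mem_nhds hz)
  rw [EventuallyEq.iteratedDeriv_eq n (eventually_eq_of_isLocalMax_norm hdiff hmax),
    iteratedDeriv_const, if_neg hn]

theorem norm_deriv_le_one_sub_sq (hφ : DifferentiableOn ℂ φ (ball 0 1))
    (hφ1 : MapsTo φ (ball 0 1) (closedBall 0 1)) : ‖deriv φ 0‖ ≤ 1 - ‖φ 0‖ ^ 2 := by
  rcases (mem_closedBall_zero_iff.1 (hφ1 (mem_ball_self one_pos))).eq_or_lt with h | h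
  · rw [← iteratedDeriv_one, iteratedDeriv_eq_zero_of_norm_eq_one hφ hφ1 h one_ne_zero, h]
    norm_num
  · have hschwarz : ‖deriv (mobiusComp φ) 0‖ ≤ 1 := by
      simpa using norm_deriv_le_div_of_mapsTo_ball (differentiableOn_mobiusComp hφ hφ1 h)
        ((mobiusComp_zero φ).symm ▸ mapsTo_mobiusComp hφ1 h) one_pos
    have hs : 0 ≤ 1 - ‖φ 0‖ ^ 2 := by nlinarith [norm_nonneg (φ 0)]
    rw [(deriv_and_iteratedDeriv_two_eq_mobiusComp hφ hφ1 h).1, norm_mul, norm_real,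
      Real.norm_of_nonneg hs]
    exact mul_le_of_le_one_left hs hschwarz

theorem norm_iteratedDeriv_two_le_one_sub_sq_deriv (hφ : DifferentiableOn ℂ φ (ball 0 1))
    (hφ1 : MapsTo φ (ball 0 1) (closedBall (φ 0) 1)) :
    ‖iteratedDeriv 2 φ 0‖ / 2 ≤ 1 - ‖deriv φ 0‖ ^ 2 := by
  have h0 : ball (0 : ℂ) 1 ∈ 𝓝 0 := ball_mem_nhds 0 one_pos
  have := norm_deriv_le_one_sub_sq ((differentiableOn_dslope h0).2 hφ)
    fun z hz ↦ by simpa using norm_dslope_le_div_of_mapsTo_ball hφ hφ1 hz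
  rwa [deriv_dslope_self (hφ.analyticAt h0), dslope_same, norm_div, Complex.norm_ofNat] at this

theorem norm_iteratedDeriv_two_le (hφ : DifferentiableOn ℂ φ (ball 0 1))
    (hφ1 : MapsTo φ (ball 0 1) (closedBall 0 1)) :
    ‖iteratedDeriv 2 φ 0‖ / 2 ≤ 1 - ‖φ 0‖ ^ 2 - ‖deriv φ 0‖ ^ 2 / (1 + ‖φ 0‖) := by
  rcases (mem_closedBall_zero_iff.1 (hφ1 (mem_ball_self one_pos))).eq_or_lt with h | h
  · rw [← iteratedDeriv_one, iteratedDeriv_eq_zero_of_norm_eq_one hφ hφ1 h one_ne_zero,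
      iteratedDeriv_eq_zero_of_norm_eq_one hφ hφ1 h two_ne_zero, h]
    norm_num
  · set g := mobiusComp φ
    have hslope := norm_iteratedDeriv_two_le_one_sub_sq_deriv (differentiableOn_mobiusComp hφ hφ1 h)
      ((mobiusComp_zero φ).symm ▸ mapsTo_mobiusComp hφ1 h)
    obtain ⟨h1, h2⟩ := deriv_and_iteratedDeriv_two_eq_mobiusComp hφ hφ1 h
    set x := ‖φ 0‖
    have hs : 0 < 1 - x ^ 2 := by nlinarith [norm_nonneg (φ 0)]
    have hD : ‖deriv φ 0‖ = ‖deriv g 0‖ * (1 - x ^ 2) := by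
      rw [h1, norm_mul, norm_real, Real.norm_of_nonneg hs.le]
    have hE : ‖iteratedDeriv 2 φ 0‖ / 2
        ≤ ‖iteratedDeriv 2 g 0‖ / 2 * (1 - x ^ 2) + x * ‖deriv g 0‖ * ‖deriv φ 0‖ := by
      calc ‖iteratedDeriv 2 φ 0‖ / 2
          ≤ (‖iteratedDeriv 2 g 0 * ((1 - x ^ 2 : ℝ) : ℂ)‖
              + ‖2 * conj (φ 0) * deriv g 0 * deriv φ 0‖) / 2 := by
            rw [h2]; gcongr; exact norm_sub_le _ _
        _ = _ := by
            simp only [norm_mul, norm_real, Real.norm_of_nonneg hs.le, norm_conj,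
              Complex.norm_ofNat]
            ring
    have hD2 : (‖deriv g 0‖ * (1 - x ^ 2)) ^ 2 / (1 + x)
        = ‖deriv g 0‖ ^ 2 * (1 - x ^ 2) * (1 - x) := by
      have : 1 + x ≠ 0 := by positivity
      field_simp
      ring
    rw [hD] at hE ⊢
    rw [hD2]
    nlinarith [mul_le_mul_of_nonneg_right hslope hs.le]

end SelfMapOfDisc

theorem fekete_szego_bound_of_coeff_bounds {x y w m : ℝ} (hx : 0 ≤ x) (hy : 0 ≤ y)
    (hy1 : 2 * y ≤ 1 - x ^ 2) (hw : 3 * w ≤ 1 - x ^ 2 - 4 * y ^ 2 / (1 + x))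
    (hm : 4 / 3 * x / (1 + x) ≤ m) :
    x * w + m * y ^ 2 ≤ 1 / 12 * (3 * m + 2 * (2 - 3 * m) * x ^ 2 - (4 - 3 * m) * x ^ 4) := by
  have hx1 : 0 < 1 + x := by positivity
  have hw' : 3 * w * (1 + x) ≤ (1 - x ^ 2) * (1 + x) - 4 * y ^ 2 := by
    have := mul_le_mul_of_nonneg_right hw hx1.le
    rwa [sub_mul, div_mul_cancel₀ _ hx1.ne'] at this
  have hm' : 4 * x ≤ 3 * m * (1 + x) := by
    rw [div_le_iff₀ hx1] at hm
    linarith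
  have hy2 : 0 ≤ (1 - x ^ 2) ^ 2 - 4 * y ^ 2 := by nlinarith
  -- `12 (1 + x) (rhs - lhs) = 4x (((1 - x²)(1 + x) - 4y²) - 3w(1 + x))`
  --   `+ (3m(1 + x) - 4x) ((1 - x²)² - 4y²)`
  nlinarith [mul_nonneg (sub_nonneg.2 hw') (by positivity : 0 ≤ 4 * x),
    mul_nonneg (sub_nonneg.2 hm') hy2]

theorem coeff_eq_iteratedDeriv_div_factorial {f : ℂ → ℂ} {a : ℕ → ℂ}
    (h : ∀ z ∈ ball (0 : ℂ) 1, HasSum (fun n ↦ a n * z ^ n) (f z)) (n : ℕ) :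
    a n = iteratedDeriv n f 0 / n.factorial := by
  have hp : HasFPowerSeriesOnBall f (.ofScalars ℂ a) 0 1 := by
    refine ⟨?_, one_pos, fun {y} hy ↦ ?_⟩
    · refine ENNReal.le_of_forall_nnreal_lt fun r hr ↦ ?_
      apply FormalMultilinearSeries.le_radius_of_tendsto (l := 0)
      simpa using (h r (by simpa using hr)).summable.tendsto_atTop_zero.norm
    · rw [← ENNReal.coe_one, Metric.eball_coe, NNReal.coe_one] at hy
      simpa [FormalMultilinearSeries.ofScalars_apply_eq, mul_comm] using h y hy
  have := hp.hasFPowerSeriesAt.eq_formalMultilinearSeries hp.analyticAt.hasFPowerSeriesAt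
  exact congrFun (FormalMultilinearSeries.ofScalars_series_injective ℂ ℂ this) n

theorem iteratedDeriv_deriv_eq_factorial_mul {f : ℂ → ℂ} {a : ℕ → ℂ}
    (h : ∀ z ∈ ball (0 : ℂ) 1, HasSum (fun n ↦ a (n + 1) * z ^ (n + 1)) (f z)) (n : ℕ) :
    iteratedDeriv n (deriv f) 0 = (n + 1).factorial * a (n + 1) := by
  have := coeff_eq_iteratedDeriv_div_factorial (a := Function.update a 0 0)
    (fun z hz ↦ (hasSum_nat_add_iff' 1).1 (by simpa using h z hz)) (n + 1)
  rw [Function.update_of_ne n.succ_ne_zero, iteratedDeriv_succ'] at this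
  rw [this, mul_div_cancel₀ _ (Nat.cast_ne_zero.2 (Nat.factorial_ne_zero _))]

theorem stmt_15_general (ω : ℂ → ℂ) (c : ℕ → ℂ) (μ : ℂ)
    (hd : DifferentiableOn ℂ ω (ball 0 1))
    (hb : ∀ z ∈ ball (0:ℂ) 1, ‖deriv ω z‖ ≤ 1)
    (hc : ∀ z ∈ ball (0:ℂ) 1, HasSum (fun n : ℕ => c (n + 1) * z ^ (n + 1)) (ω z))
    (h1 : (4/3) * ‖c 1‖ / (1 + ‖c 1‖) ≤ ‖μ‖) :
    ‖c 1 * c 3 - μ * c 2^2‖ ≤ (1/12) * (3 * ‖μ‖ + 2 * (2 - 3 * ‖μ‖) * ‖c 1‖^2 - (4 - 3 * ‖μ‖) * ‖c 1‖^4) := by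
  have hc1 : deriv ω 0 = c 1 := by simpa using iteratedDeriv_deriv_eq_factorial_mul hc 0
  have hc2 : deriv (deriv ω) 0 = 2 * c 2 := by
    simpa using iteratedDeriv_deriv_eq_factorial_mul hc 1
  have hc3 : iteratedDeriv 2 (deriv ω) 0 = 6 * c 3 := by
    simpa [Nat.factorial] using iteratedDeriv_deriv_eq_factorial_mul hc 2
  have hφ : DifferentiableOn ℂ (deriv ω) (ball 0 1) :=
    (hd.analyticOnNhd isOpen_ball).deriv.differentiableOn
  have hφ1 : MapsTo (deriv ω) (ball 0 1) (closedBall 0 1) :=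
    fun z hz ↦ mem_closedBall_zero_iff.2 (hb z hz)
  have hA : 2 * ‖c 2‖ ≤ 1 - ‖c 1‖ ^ 2 := by
    simpa [hc1, hc2] using norm_deriv_le_one_sub_sq hφ hφ1
  have hB : 3 * ‖c 3‖ ≤ 1 - ‖c 1‖ ^ 2 - 4 * ‖c 2‖ ^ 2 / (1 + ‖c 1‖) := by
    have := norm_iteratedDeriv_two_le hφ hφ1
    simp only [hc1, hc2, hc3, norm_mul, mul_pow, Complex.norm_ofNat] at this
    linarith
  calc ‖c 1 * c 3 - μ * c 2 ^ 2‖ ≤ ‖c 1‖ * ‖c 3‖ + ‖μ‖ * ‖c 2‖ ^ 2 := by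
        rw [← norm_pow, ← norm_mul, ← norm_mul]
        exact norm_sub_le _ _
    _ ≤ _ := fekete_szego_bound_of_coeff_bounds (norm_nonneg _) (norm_nonneg _) hA hB h1

theorem stmt_15 (ω : ℂ → ℂ) (c : ℕ → ℂ) (μ : ℂ)
    (hd : DifferentiableOn ℂ ω (ball 0 1))
    (h0 : ω 0 = 0)
    (hb : ∀ z ∈ ball (0:ℂ) 1, ‖deriv ω z‖ ≤ 1)
    (hc : ∀ z ∈ ball (0:ℂ) 1, HasSum (fun n : ℕ => c (n + 1) * z ^ (n + 1)) (ω z))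
    (h1 : (4/3) * ‖c 1‖ / (1 + ‖c 1‖) ≤ ‖μ‖) :
    ‖c 1 * c 3 - μ * c 2^2‖ ≤ (1/12) * (3 * ‖μ‖ + 2 * (2 - 3 * ‖μ‖) * ‖c 1‖^2 - (4 - 3 * ‖μ‖) * ‖c 1‖^4) :=
  stmt_15_general ω c μ hd hb hc h1
end
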